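/- Let G be a finite group, E a number field with ring of integers O_E, let V be a free E[G]-module of rank d, and let X, Y be full O_E[G]-lattices in V ⊆ E[G]^d. Define 𝒜(X,Y) := {λ ∈ E[G] : λX ⊆ Y}, and for an O_E[G]-lattice M in E[G]^d (resp. E[G]) let M* be its dual with respect to the pairing s (resp. t). Then (X, Y*) = 𝒜(X,Y)*, where (X, Y*) denotes the O_E-module generated by all (x, y*) with x ∈ X, y* ∈ Y*, and the pairing ( · , · ) : E[G]^d × E[G]^d → E[G] is (μ,ν) = Σ_{g∈G} s(gμ,ν)g^{-1}. -/

import Mathlib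

/-!
The pairing is `(μ, ν) = ∑ᵢ μᵢ νᵢ` and `t(a, b)` is the coefficient of `1` in `a b`, so the
cyclicity of this trace gives the adjunction `t((x, ν), λ) = s(ν, λ x)`. Writing `L` for the `𝓞_E`-span of
the `(x, ν)` with `x ∈ X`, `ν ∈ Y*`, it shows `L ⊆ 𝒜(X,Y)*` and that `λ ∈ L*` iff `λ X ⊆ Y**`.

Full lattices over a Dedekind domain are reflexive, `M** = M`: such an `M` is projective, so `id_M`
factors through some `Rⁿ`, and the coordinate functionals of the factorisation are represented by
elements of `M*`. Hence `L* ⊆ 𝒜(X,Y)`, and `𝒜(X,Y)* ⊆ L** = L` once `L` is a full lattice. It is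
finitely generated because it lies in the dual of the full lattice `𝒜(X,Y)`, and it spans `E[G]`
because `E[G]` acts faithfully on `E[G]^d` when `d ≠ 0`; for `d = 0` both sides are `0`.
-/

section

variable {E : Type*} [Field E] {G : Type*} [Group G] [Fintype G]

/-- The trace pairing on the group algebra `E[G]`, extending
`t(g,h) = 1` if `gh = 1` and `0` otherwise. -/
noncomputable def tracePairing (x y : MonoidAlgebra E G) : E :=
  ∑ g : G, x.coeff g * y.coeff g⁻¹

/-- The `d`-fold orthogonal sum of the trace pairing on `E[G]^d`. -/
noncomputable def sPairing {d : ℕ} (x y : Fin d → MonoidAlgebra E G) : E :=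
  ∑ i, tracePairing (x i) (y i)

/-- The `E[G]`-valued pairing `(μ,ν) = ∑_{g ∈ G} s(gμ, ν) g⁻¹` on `E[G]^d`. -/
noncomputable def gPairing {d : ℕ} (μ ν : Fin d → MonoidAlgebra E G) : MonoidAlgebra E G :=
  ∑ g : G, MonoidAlgebra.single g⁻¹
    (sPairing (fun i => MonoidAlgebra.single g (1 : E) * μ i) ν)

open scoped NumberField

/-- The ring of integers acts on any vector space over the field. -/
noncomputable instance (priority := 50) moduleRingOfIntegers
    {K : Type*} [Field K] [NumberField K] (W : Type*) [AddCommMonoid W] [Module K W] :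
    Module (𝓞 K) W :=
  Module.compHom W (algebraMap (𝓞 K) K)

/-- `e ∈ E` is integral, i.e. lies in `𝓞 E ⊆ E`. -/
def MemRingOfIntegers [NumberField E] (e : E) : Prop :=
  ∃ r : 𝓞 E, algebraMap (𝓞 E) E r = e

open LinearMap (BilinForm)

section Lattice

variable {R K V : Type*} [CommRing R] [Field K] [Algebra R K]
  [AddCommGroup V] [Module K V] [Module R V] [IsScalarTower R K V]

namespace Submodule

theorem isLocalizedModule_subtype_of_span_eq_top [IsFractionRing R K] {M : Submodule R V}
    (hM : span K (M : Set V) = ⊤) : IsLocalizedModule (nonZeroDivisors R) M.subtype := by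
  have := isLocalizedModule_id (nonZeroDivisors R) V K
  refine ⟨IsLocalizedModule.map_units (LinearMap.id : V →ₗ[R] V), fun v => ?_,
    fun h => ⟨1, by simpa using h⟩⟩
  have hv : v ∈ M.localized' K (nonZeroDivisors R) LinearMap.id := by
    simp [localized'_eq_span, hM]
  obtain ⟨m, hm, c, rfl⟩ := hv
  exact ⟨(⟨m, hm⟩, c), IsLocalizedModule.mk'_cancel' _ _ _⟩

theorem isBaseChange_subtype_of_span_eq_top [IsFractionRing R K] {M : Submodule R V}
    (hM : span K (M : Set V) = ⊤) : IsBaseChange K M.subtype :=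
  (isLocalizedModule_iff_isBaseChange (nonZeroDivisors R) K _).mp
    (isLocalizedModule_subtype_of_span_eq_top hM)

theorem exists_smul_mem_of_fg [IsFractionRing R K] {M N : Submodule R V}
    (hM : span K (M : Set V) = ⊤) (hN : N.FG) : ∃ c ∈ nonZeroDivisors R, ∀ n ∈ N, c • n ∈ M := by
  have := isLocalizedModule_subtype_of_span_eq_top hM
  obtain ⟨s, rfl⟩ := hN
  obtain ⟨c, hc⟩ :=
    IsLocalizedModule.exist_integer_multiples_of_finset (nonZeroDivisors R) M.subtype s
  refine ⟨c, c.2, fun n hn => ?_⟩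
  have : span R s ≤ M.comap (c • LinearMap.id) := span_le.mpr fun x hx => by
    obtain ⟨m, hm⟩ := hc x hx
    change (c : R) • x ∈ M
    rw [← hm]
    exact m.2
  exact this hn

end Submodule

namespace LinearMap.BilinForm

variable {B : BilinForm K V}

theorem exists_apply_eq_of_span_eq_top [IsFractionRing R K] [FiniteDimensional K V]
    (hB : B.Nondegenerate) {M : Submodule R V} (hM : Submodule.span K (M : Set V) = ⊤)
    (σ : M →ₗ[R] R) : ∃ w : V, ∀ m : M, B w m = algebraMap R K (σ m) := by
  have hM' := Submodule.isBaseChange_subtype_of_span_eq_top hM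
  refine ⟨(B.toDual hB).symm (hM'.lift (Algebra.linearMap R K ∘ₗ σ)), fun m => ?_⟩
  rw [← toDual_def hB, LinearEquiv.apply_symm_apply]
  exact hM'.lift_eq _ m

theorem span_dualSubmodule_eq_top_of_fg [IsFractionRing R K] (B : BilinForm K V)
    {M : Submodule R V} (hM : M.FG) : Submodule.span K (B.dualSubmodule M : Set V) = ⊤ := by
  refine eq_top_iff.mpr fun v _ => ?_
  have h1 : Submodule.span K ((1 : Submodule R K) : Set K) = ⊤ :=
    eq_top_iff.mpr fun k _ => by
      simpa using Submodule.smul_mem _ k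
        (Submodule.subset_span (Submodule.mem_one.mpr ⟨1, map_one (algebraMap R K)⟩))
  obtain ⟨c, hc, hcM⟩ := Submodule.exists_smul_mem_of_fg h1
    (hM.map ((B v).restrictScalars R))
  have hcv : c • v ∈ B.dualSubmodule M := fun m hm => by
    rw [← algebraMap_smul K, map_smul, LinearMap.smul_apply, algebraMap_smul]
    exact hcM _ (Submodule.mem_map_of_mem hm)
  have hc' : algebraMap R K c ≠ 0 := (IsLocalization.map_units K ⟨c, hc⟩).ne_zero
  rw [← inv_smul_smul₀ hc' v, algebraMap_smul]
  exact Submodule.smul_mem _ _ (Submodule.subset_span hcv)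

theorem dualSubmodule_fg_of_span_eq_top [IsNoetherianRing R] [FiniteDimensional K V]
    (hB : B.Nondegenerate) {M : Submodule R V} (hM : Submodule.span K (M : Set V) = ⊤) :
    (B.dualSubmodule M).FG := by
  classical
  obtain ⟨s, hsM, hs, hli⟩ := exists_linearIndependent K (M : Set V)
  have : Finite s := hli.setFinite.to_subtype
  let b : Module.Basis s K V := .mk hli (by simp [hs, hM])
  have hbM : Submodule.span R (Set.range b) ≤ M := Submodule.span_le.mpr <| by
    simpa [b] using hsM
  refine Submodule.FG.of_le (Submodule.fg_span (Set.finite_range (B.dualBasis hB b))) ?_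
  rw [← B.dualSubmodule_span_of_basis hB]
  exact fun v hv m hm => hv m (hbM hm)

theorem dualSubmodule_top_eq_bot [IsFractionRing R K] [IsDomain R] (hR : ¬IsField R)
    (hB : B.SeparatingLeft) : B.dualSubmodule (⊤ : Submodule R V) = ⊥ := by
  refine eq_bot_iff.mpr fun x hx => (Submodule.mem_bot R).mpr (hB x fun y => ?_)
  by_contra hxy
  refine hR ((IsFractionRing.surjective_iff_isField (K := K)).mp fun k => ?_)
  obtain ⟨r, hr⟩ := Submodule.mem_one.mp (hx ((k / B x y) • y) Submodule.mem_top)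
  exact ⟨r, by rw [hr, map_smul, smul_eq_mul, div_mul_cancel₀ _ hxy]⟩

theorem dualSubmodule_flip_dualSubmodule_of_isLattice [IsFractionRing R K] [IsDedekindDomain R]
    [FiniteDimensional K V] (hB : B.Nondegenerate) (M : Submodule R V) [M.IsLattice K] :
    B.flip.dualSubmodule (B.dualSubmodule M) = M := by
  refine le_antisymm (fun v hv => ?_) (B.le_flip_dualSubmodule.mpr le_rfl)
  have hM := Submodule.IsLattice.span_eq_top (A := K) (M := M)
  have : Module.IsTorsionFree R V := .trans_faithfulSMul R K V
  have : Module.FinitePresentation R M := Module.finitePresentation_of_finite R M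
  have : Module.Projective R M := Module.Flat.projective_of_finitePresentation
  obtain ⟨n, π, hπ⟩ := Module.Finite.exists_fin' R M
  obtain ⟨σ, hσ⟩ := Module.projective_lifting_property π LinearMap.id hπ
  choose w hw using fun i => exists_apply_eq_of_span_eq_top hB hM (LinearMap.proj i ∘ₗ σ)
  let e : Fin n → V := fun i => π (Pi.basisFun R (Fin n) i)
  have hdecomp : ∀ m : M, (m : V) = ∑ i, σ m i • e i := fun m => by
    conv_lhs => rw [← LinearMap.id_apply (R := R) m, ← hσ, LinearMap.comp_apply,
      ← (Pi.basisFun R (Fin n)).sum_repr (σ m)]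
    simp [e]
  have hid : ∑ i, (B (w i)).smulRight (e i) = LinearMap.id := by
    refine LinearMap.ext_on hM fun m hm => ?_
    rw [LinearMap.id_apply, LinearMap.sum_apply]
    conv_rhs => rw [show m = ((⟨m, hm⟩ : M) : V) from rfl, hdecomp]
    refine Finset.sum_congr rfl fun i _ => ?_
    rw [LinearMap.smulRight_apply, hw i ⟨m, hm⟩, algebraMap_smul]
    rfl
  choose r hr using fun i => Submodule.mem_one.mp
    (hv (w i) fun m hm => Submodule.mem_one.mpr ⟨_, (hw i ⟨m, hm⟩).symm⟩)
  have : v = ∑ i, r i • e i := by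
    conv_lhs => rw [← LinearMap.id_apply (R := K) v, ← hid]
    simp only [LinearMap.sum_apply, LinearMap.smulRight_apply]
    refine Finset.sum_congr rfl fun i _ => ?_
    rw [← algebraMap_smul K (r i), hr i]
    rfl
  rw [this]
  exact Submodule.sum_mem _ fun i _ => M.smul_mem _ (π _).2

end LinearMap.BilinForm

section Conductor

variable (A : Type*) [Ring A] [Module R A] [Module A V] [IsScalarTower R A V]

def Submodule.conductor (X Y : Submodule R V) : Submodule R A where
  carrier := {a | ∀ x ∈ X, a • x ∈ Y}
  add_mem' ha hb x hx := by rw [add_smul]; exact Y.add_mem (ha x hx) (hb x hx)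
  zero_mem' x _ := by rw [zero_smul]; exact Y.zero_mem
  smul_mem' r a ha x hx := by rw [smul_assoc]; exact Y.smul_mem r (ha x hx)

theorem Submodule.mem_conductor {X Y : Submodule R V} {a : A} :
    a ∈ conductor A X Y ↔ ∀ x ∈ X, a • x ∈ Y :=
  Iff.rfl

variable [Algebra K A] [IsScalarTower R K A] [IsScalarTower K A V]

theorem Submodule.span_conductor_eq_top [IsFractionRing R K] {X Y : Submodule R V}
    (hX : X.FG) (hY : span K (Y : Set V) = ⊤) : span K (conductor A X Y : Set A) = ⊤ := by
  refine eq_top_iff.mpr fun a _ => ?_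
  obtain ⟨c, hc, hcX⟩ := exists_smul_mem_of_fg hY
    (hX.map ((Algebra.lsmul K K V a).restrictScalars R))
  have hca : c • a ∈ conductor A X Y := fun x hx => by
    rw [smul_assoc]
    exact hcX _ (mem_map_of_mem hx)
  have hc' : algebraMap R K c ≠ 0 := (IsLocalization.map_units K ⟨c, hc⟩).ne_zero
  rw [← inv_smul_smul₀ hc' a, algebraMap_smul]
  exact smul_mem _ _ (subset_span hca)

variable {A}

theorem Submodule.span_image2_eq_top_of_adjoint [FiniteDimensional K A] [FaithfulSMul A V]
    {t : BilinForm K A} {s : BilinForm K V} (ht : t.Nondegenerate) (hs : s.Nondegenerate)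
    {P : V → V → A} (hP : ∀ a x ν, t (P x ν) a = s ν (a • x)) {X Y : Set V}
    (hX : span K X = ⊤) (hY : span K Y = ⊤) : span K (Set.image2 P X Y) = ⊤ := by
  by_contra hne
  obtain ⟨f, hf, hfP⟩ :=
    exists_dual_map_eq_bot_of_lt_top (lt_top_iff_ne_top.mpr hne) inferInstance
  obtain ⟨a, rfl⟩ := (t.flip.toDual ht.flip).surjective f
  have hax : ∀ x ∈ X, a • x = 0 := fun x hx => by
    have : s.flip (a • x) = 0 := LinearMap.ext_on hY fun ν hν => by
      have hPν := hfP ▸ mem_map_of_mem (subset_span (Set.mem_image2_of_mem hx hν))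
      rw [LinearMap.BilinForm.flip_apply, ← hP, LinearMap.zero_apply]
      simpa [LinearMap.BilinForm.toDual_def] using hPν
    exact hs.2 _ fun ν => LinearMap.congr_fun this ν
  have : Algebra.lsmul K K V a = 0 := LinearMap.ext_on hX fun x hx => hax x hx
  have ha : a = 0 := FaithfulSMul.eq_of_smul_eq_smul fun v => by
    rw [zero_smul]
    exact LinearMap.congr_fun this v
  exact hf (by rw [ha, map_zero])

theorem Submodule.span_image2_dualSubmodule_eq_dualSubmodule_conductor [IsFractionRing R K]
    [IsDedekindDomain R] [FiniteDimensional K A] [FiniteDimensional K V] [FaithfulSMul A V]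
    {t : BilinForm K A} {s : BilinForm K V} (ht : t.Nondegenerate) (hs : s.Nondegenerate)
    {P : V → V → A} (hP : ∀ a x ν, t (P x ν) a = s ν (a • x))
    (X Y : Submodule R V) [X.IsLattice K] [Y.IsLattice K] :
    span R (Set.image2 P X (s.dualSubmodule Y)) = t.dualSubmodule (conductor A X Y) := by
  set L := span R (Set.image2 P X (s.dualSubmodule Y))
  have hL : L ≤ t.dualSubmodule (conductor A X Y) := span_le.mpr <| by
    rintro _ ⟨x, hx, ν, hν, rfl⟩ a ha
    rw [hP]
    exact hν _ (ha x hx)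
  have : L.IsLattice K := by
    refine ⟨(t.dualSubmodule_fg_of_span_eq_top ht ?_).of_le hL, ?_⟩
    · exact span_conductor_eq_top A IsLattice.fg IsLattice.span_eq_top
    · rw [span_span_of_tower]
      exact span_image2_eq_top_of_adjoint ht hs hP IsLattice.span_eq_top
        (s.span_dualSubmodule_eq_top_of_fg IsLattice.fg)
  have hLc : t.flip.dualSubmodule L ≤ conductor A X Y := fun a ha x hx => by
    rw [← s.dualSubmodule_flip_dualSubmodule_of_isLattice hs Y]
    intro ν hν
    rw [LinearMap.BilinForm.flip_apply, ← hP]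
    exact ha _ (subset_span (Set.mem_image2_of_mem hx hν))
  refine hL.antisymm ?_
  conv_rhs => rw [← t.flip.dualSubmodule_flip_dualSubmodule_of_isLattice ht.flip L]
  exact fun μ hμ a ha => hμ a (hLc ha)

end Conductor

end Lattice

theorem MonoidAlgebra.coeff_mul_one_comm {k H : Type*} [CommSemiring k] [Group H]
    (x y : MonoidAlgebra k H) : (x * y).coeff 1 = (y * x).coeff 1 := by
  rw [coeff_mul_apply_left, coeff_mul_apply_right]
  simp [mul_comm]

theorem tracePairing_eq_coeff_mul (x y : MonoidAlgebra E G) :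
    tracePairing x y = (x * y).coeff 1 := by
  rw [MonoidAlgebra.coeff_mul_apply_left, Finsupp.sum_fintype _ _ (by simp)]
  simp [tracePairing]

noncomputable def tracePairingForm : LinearMap.BilinForm E (MonoidAlgebra E G) :=
  (LinearMap.mul E _).compr₂
    (Finsupp.lapply 1 ∘ₗ (MonoidAlgebra.coeffLinearEquiv E).toLinearMap)

theorem tracePairingForm_apply (x y : MonoidAlgebra E G) :
    tracePairingForm x y = tracePairing x y :=
  (tracePairing_eq_coeff_mul x y).symm

noncomputable def sPairingForm (d : ℕ) : LinearMap.BilinForm E (Fin d → MonoidAlgebra E G) :=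
  ∑ i, tracePairingForm.compl₁₂ (LinearMap.proj i) (LinearMap.proj i)

theorem sPairingForm_apply {d : ℕ} (x y : Fin d → MonoidAlgebra E G) :
    sPairingForm d x y = sPairing x y := by
  simp [sPairingForm, sPairing, tracePairingForm_apply]

theorem tracePairingForm_nondegenerate :
    (tracePairingForm (E := E) (G := G)).Nondegenerate :=
  ⟨fun x hx => MonoidAlgebra.ext <| Finsupp.ext fun g => by
      simpa [tracePairingForm_apply, tracePairing_eq_coeff_mul] using hx (.single g⁻¹ 1),
    fun y hy => MonoidAlgebra.ext <| Finsupp.ext fun g => by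
      simpa [tracePairingForm_apply, tracePairing_eq_coeff_mul] using hy (.single g⁻¹ 1)⟩

theorem sPairingForm_nondegenerate (d : ℕ) :
    (sPairingForm (E := E) (G := G) d).Nondegenerate := by
  refine ⟨fun x hx => funext fun i => tracePairingForm_nondegenerate.1 _ fun z => ?_,
    fun y hy => funext fun i => tracePairingForm_nondegenerate.2 _ fun z => ?_⟩
  · simpa [sPairingForm, Pi.single_apply, apply_ite] using hx (Pi.single i z)
  · simpa [sPairingForm, Pi.single_apply, apply_ite, ite_apply] using hy (Pi.single i z)

theorem gPairing_eq_sum_mul {d : ℕ} (μ ν : Fin d → MonoidAlgebra E G) :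
    gPairing μ ν = ∑ i, μ i * ν i := by
  classical
  ext h
  simp [gPairing, sPairing, tracePairing_eq_coeff_mul, MonoidAlgebra.coeff_sum, mul_assoc,
    Finsupp.single_apply, inv_eq_iff_eq_inv]

theorem tracePairing_gPairing {d : ℕ} (a : MonoidAlgebra E G)
    (μ ν : Fin d → MonoidAlgebra E G) : tracePairing (gPairing μ ν) a = sPairing ν (a • μ) := by
  simp only [gPairing_eq_sum_mul, sPairing, tracePairing_eq_coeff_mul, Finset.sum_mul,
    MonoidAlgebra.coeff_sum, Finsupp.finsetSum_apply, Pi.smul_apply, smul_eq_mul]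
  refine Finset.sum_congr rfl fun i _ => ?_
  rw [mul_assoc, MonoidAlgebra.coeff_mul_one_comm, mul_assoc]

theorem memRingOfIntegers_iff_mem_one [NumberField E] (e : E) :
    MemRingOfIntegers e ↔ e ∈ (1 : Submodule (𝓞 E) E) :=
  Submodule.mem_one.symm

theorem span_image2_gPairing_eq_dualSubmodule_conductor [NumberField E] {d : ℕ}
    (X Y : Submodule (𝓞 E) (Fin d → MonoidAlgebra E G)) [X.IsLattice E] [Y.IsLattice E] :
    Submodule.span (𝓞 E)
        (Set.image2 (gPairing (d := d)) X ((sPairingForm d).dualSubmodule Y)) =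
      tracePairingForm.dualSubmodule (Submodule.conductor (MonoidAlgebra E G) X Y) := by
  rcases eq_or_ne d 0 with rfl | hd
  · have hc : Submodule.conductor (MonoidAlgebra E G) X Y = ⊤ :=
      eq_top_iff.mpr fun a _ x _ => Subsingleton.elim 0 (a • x) ▸ Y.zero_mem
    rw [hc, tracePairingForm.dualSubmodule_top_eq_bot (NumberField.RingOfIntegers.not_isField E)
      tracePairingForm_nondegenerate.1, Submodule.span_eq_bot]
    rintro _ ⟨x, -, ν, -, rfl⟩
    simp [gPairing_eq_sum_mul]
  · have : NeZero d := ⟨hd⟩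
    refine Submodule.span_image2_dualSubmodule_eq_dualSubmodule_conductor
      tracePairingForm_nondegenerate (sPairingForm_nondegenerate d) (fun a x ν => ?_) X Y
    rw [tracePairingForm_apply, sPairingForm_apply, tracePairing_gPairing]

theorem gPairing_span_eq_dual_of_conductor [NumberField E] {d : ℕ}
    (X Y : Submodule (𝓞 E) (Fin d → MonoidAlgebra E G))
    (hXfg : X.FG) (hYfg : Y.FG)
    (hXfull : Submodule.span E (X : Set (Fin d → MonoidAlgebra E G)) = ⊤)
    (hYfull : Submodule.span E (Y : Set (Fin d → MonoidAlgebra E G)) = ⊤) :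
    (Submodule.span (𝓞 E)
        {r : MonoidAlgebra E G | ∃ x ∈ X, ∃ ν : Fin d → MonoidAlgebra E G,
          (∀ y ∈ Y, MemRingOfIntegers (sPairing ν y)) ∧ r = gPairing x ν} :
      Set (MonoidAlgebra E G)) =
    {μ : MonoidAlgebra E G | ∀ lam : MonoidAlgebra E G,
      (∀ x ∈ X, (fun i => lam * x i) ∈ Y) → MemRingOfIntegers (tracePairing μ lam)} := by
  have : X.IsLattice E := ⟨hXfg, hXfull⟩
  have : Y.IsLattice E := ⟨hYfg, hYfull⟩
  have key := congrArg SetLike.coe (span_image2_gPairing_eq_dualSubmodule_conductor X Y)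
  convert key using 3
  · ext r
    simp [memRingOfIntegers_iff_mem_one, LinearMap.BilinForm.mem_dualSubmodule,
      sPairingForm_apply, eq_comm]
  · ext μ
    simp only [Set.mem_ofPred_eq, SetLike.mem_coe, LinearMap.BilinForm.mem_dualSubmodule,
      Submodule.mem_conductor, tracePairingForm_apply, memRingOfIntegers_iff_mem_one]
    rfl

end
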